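/- arXiv:2305.17275 — 3 statements merged into one kernel-verified Lean document; each statement's English description precedes it below -/
import Mathlib

section
/- Let n ≥ 1. Let Q and R be fixed n×n real symmetric positive semidefinite matrices, let S be the 2n×2n block-diagonal matrix diag(Q,R), and let U and V be independent random n×n matrices each distributed according to the Haar probability measure on the orthogonal group O(n). Let N_1, …, N_n, M_1, …, M_n be i.i.d. random variables with the chi-squared distribution with n degrees of freedom (i.e., the Gamma distribution with shape n/2 and rate 1/2), independent of (U, V). Set μ := min_{1≤j≤n} (u_j^⊤ Q u_j + v_j^⊤ R v_j), where u_j, v_j are the j-th columns of U, V. Then (1/n)·E[ min_{1≤j≤n} (N_j·u_j^⊤ Q u_j + M_j·v_j^⊤ R v_j) ] ≤ E[μ] ≤ trace(S)/n. -/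
open MeasureTheory ProbabilityTheory Matrix

noncomputable section

instance matMeas {k m : Type*} : MeasurableSpace (Matrix k m ℝ) := MeasurableSpace.pi

/-- `μ = min_{j ≤ n} (u_j^⊤ Q u_j + v_j^⊤ R v_j)` where `u_j`, `v_j` are the columns of `U`, `V`. -/
def colMin {n : ℕ} (Q R U V : Matrix (Fin n) (Fin n) ℝ) : ℝ :=
  ⨅ j : Fin n,
    (((fun i => U i j) ⬝ᵥ Q.mulVec fun i => U i j) +
      ((fun i => V i j) ⬝ᵥ R.mulVec fun i => V i j))

/-- The law of `U` is the Haar probability measure on the orthogonal group `O(n)`: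
`U` is a.s. orthogonal and its law is invariant under left translation by every element of
`O(n)`.  (These properties uniquely characterize the Haar probability measure on `O(n)`.) -/
def IsHaarOrthogonal {Ω : Type*} [MeasurableSpace Ω] (P : Measure Ω) {n : ℕ}
    (U : Ω → Matrix (Fin n) (Fin n) ℝ) : Prop :=
  Measurable U ∧ (∀ᵐ ω ∂P, U ω ∈ Matrix.orthogonalGroup (Fin n) ℝ) ∧
    ∀ A ∈ Matrix.orthogonalGroup (Fin n) ℝ,
      Measure.map (fun ω => A * U ω) P = Measure.map U P

/-!
The upper bound holds pointwise: for orthogonal `U`, `V` the column forms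
`u_jᵀ Q u_j + v_jᵀ R v_j` sum to `tr Q + tr R = tr S`, so their minimum is at most their average.

For the lower bound let `J` be the index minimizing `u_jᵀ Q u_j + v_jᵀ R v_j`, chosen
measurably. The weighted minimum is at most `N_J u_Jᵀ Q u_J + M_J v_Jᵀ R v_J`, and since `J` is a
function of `(U, V)`, which is independent of the `χ²_n` weights of mean `n`, the expectation of
this is `n E[μ]`.
-/

section Gamma
open Real Set

lemma measurable_gammaPDF (a r : ℝ) : Measurable (gammaPDF a r) :=
  (measurable_gammaPDFReal a r).ennreal_ofReal

lemma ae_nonneg_gammaMeasure (a r : ℝ) : ∀ᵐ x ∂gammaMeasure a r, 0 ≤ x := by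
  rw [gammaMeasure, ae_withDensity_iff (measurable_gammaPDF a r)]
  exact ae_of_all _ fun x hx => not_lt.mp fun hneg => hx (gammaPDF_of_neg hneg)

lemma integral_id_gammaMeasure {a r : ℝ} (ha : 0 < a) (hr : 0 < r) :
    ∫ x, x ∂gammaMeasure a r = a / r := by
  rw [gammaMeasure, integral_withDensity_eq_integral_toReal_smul
    (measurable_gammaPDF a r) (ae_of_all _ fun _ => ENNReal.ofReal_lt_top)]
  simp only [gammaPDF, ENNReal.toReal_ofReal (gammaPDFReal_nonneg ha hr _), smul_eq_mul]
  have hpos : ∀ x ∈ Ioi (0 : ℝ), gammaPDFReal a r x * x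
      = r ^ a / Gamma a * (x ^ ((a + 1) - 1) * exp (-(r * x))) := fun x (hx : 0 < x) => by
    rw [gammaPDFReal, if_pos hx.le, add_sub_cancel_right, rpow_sub_one hx.ne']
    field_simp
  rw [← setIntegral_eq_integral_of_forall_compl_eq_zero (s := Ioi 0) fun x hx => ?_,
    setIntegral_congr_fun measurableSet_Ioi hpos, integral_const_mul,
    integral_rpow_mul_exp_neg_mul_Ioi (by linarith) hr, Gamma_add_one ha.ne',
    div_rpow zero_le_one hr.le, one_rpow, rpow_add_one hr.ne']
  · field_simp [(Gamma_pos_of_pos ha).ne', (rpow_pos_of_pos hr a).ne']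
  · rcases (not_lt.mp (show ¬ 0 < x from hx)).lt_or_eq with hneg | rfl
    · simp [gammaPDFReal, not_le.mpr hneg]
    · simp

end Gamma

section GammaLaw
variable {Ω : Type*} [MeasurableSpace Ω] {P : Measure Ω} {X : Ω → ℝ} {a r : ℝ}

lemma integral_eq_of_map_eq_gammaMeasure (hX : Measurable X) (hlaw : P.map X = gammaMeasure a r)
    (ha : 0 < a) (hr : 0 < r) : ∫ ω, X ω ∂P = a / r := by
  rw [← integral_id_gammaMeasure ha hr, ← hlaw,
    integral_map hX.aemeasurable (f := fun x => x) aestronglyMeasurable_id]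

lemma integrable_of_map_eq_gammaMeasure (hX : Measurable X) (hlaw : P.map X = gammaMeasure a r)
    (ha : 0 < a) (hr : 0 < r) : Integrable X P :=
  .of_integral_ne_zero <| by rw [integral_eq_of_map_eq_gammaMeasure hX hlaw ha hr]; positivity

lemma ae_nonneg_of_map_eq_gammaMeasure (hX : Measurable X) (hlaw : P.map X = gammaMeasure a r) :
    ∀ᵐ ω ∂P, 0 ≤ X ω :=
  ae_of_ae_map hX.aemeasurable (hlaw ▸ ae_nonneg_gammaMeasure a r)

end GammaLaw

section ArgMin
variable {ι E : Type*} [Fintype ι] [Nonempty ι]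

lemma filter_isMinimizer_nonempty (g : ι → E → ℝ) (x : E) :
    (Finset.univ.filter fun j => ∀ k, g j x ≤ g k x).Nonempty := by
  obtain ⟨j, -, hj⟩ := Finset.univ.exists_min_image (fun j => g j x) Finset.univ_nonempty
  exact ⟨j, Finset.mem_filter.mpr ⟨Finset.mem_univ j, fun k => hj k (Finset.mem_univ k)⟩⟩

variable [LinearOrder ι]

def argminIndex (g : ι → E → ℝ) (x : E) : ι :=
  (Finset.univ.filter fun j => ∀ k, g j x ≤ g k x).min' (filter_isMinimizer_nonempty g x)

lemma argminIndex_le (g : ι → E → ℝ) (x : E) (k : ι) : g (argminIndex g x) x ≤ g k x :=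
  (Finset.mem_filter.mp (Finset.min'_mem _ (filter_isMinimizer_nonempty g x))).2 k

lemma iInf_eq_argminIndex (g : ι → E → ℝ) (x : E) : ⨅ j, g j x = g (argminIndex g x) x :=
  le_antisymm (ciInf_le (Set.finite_range _).bddBelow _) (le_ciInf (argminIndex_le g x))

lemma measurable_argminIndex [MeasurableSpace E] [MeasurableSpace ι] {g : ι → E → ℝ}
    (hg : ∀ j, Measurable (g j)) : Measurable (argminIndex g) := by
  refine measurable_to_countable' fun j => ?_
  have hmin : ∀ i, Measurable fun x => ∀ k, g i x ≤ g k x := fun i =>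
    .forall fun k => measurableSet_setOfPred.mp (measurableSet_le (hg i) (hg k))
  have : argminIndex g ⁻¹' {j} =
      {x | (∀ k, g j x ≤ g k x) ∧ ∀ i, (∀ k, g i x ≤ g k x) → j ≤ i} := by
    ext x
    simp [argminIndex, Finset.min'_eq_iff]
  rw [this]
  exact measurableSet_setOfPred.mpr ((hmin j).and (.forall fun i => (hmin i).imp measurable_const))

end ArgMin

instance Sum.instMeasurableSingletonClass {α β : Type*} [MeasurableSpace α] [MeasurableSpace β]
    [MeasurableSingletonClass α] [MeasurableSingletonClass β] :
    MeasurableSingletonClass (α ⊕ β) :=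
  ⟨by
    rintro (a | b)
    · exact Set.image_singleton ▸ (measurableSet_singleton a).inl_image
    · exact Set.image_singleton ▸ (measurableSet_singleton b).inr_image⟩

section RandomIndex
variable {Ω E ι κ : Type*} [MeasurableSpace Ω] [MeasurableSpace E] {P : Measure Ω}
  {Z : Ω → E}

lemma measurable_apply_index [MeasurableSpace ι] [Countable ι] [MeasurableSingletonClass ι]
    {a : ι → E → ℝ} (ha : ∀ j, Measurable (a j)) {J : E → ι} (hJ : Measurable J) :
    Measurable fun z => a (J z) z :=
  (measurable_from_prod_countable_right (f := fun p : ι × E => a p.1 p.2) ha).comp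
    (hJ.prodMk measurable_id)

lemma integrable_apply_index [MeasurableSpace ι] [Fintype ι] [MeasurableSingletonClass ι]
    (hZ : Measurable Z) {a : ι → E → ℝ} (ha : ∀ j, Measurable (a j))
    (haZ : ∀ j, Integrable (fun ω => a j (Z ω)) P) {J : E → ι} (hJ : Measurable J) :
    Integrable (fun ω => a (J (Z ω)) (Z ω)) P :=
  (integrable_finsetSum Finset.univ fun j _ => (haZ j).norm).mono'
    ((measurable_apply_index ha hJ).comp hZ).aestronglyMeasurable
    (ae_of_all _ fun ω => Finset.single_le_sum (f := fun j => ‖a j (Z ω)‖)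
      (fun _ _ => norm_nonneg _) (Finset.mem_univ _))

omit [MeasurableSpace E] in
lemma sum_indicator_preimage_singleton [Fintype κ] (σ : E → κ) (h : E → ℝ) (z : E) :
    ∑ k, (σ ⁻¹' {k}).indicator h z = h z := by
  rw [Finset.sum_eq_single (σ z) (fun k _ hk => by simp [Ne.symm hk]) (by simp)]
  simp

omit [MeasurableSpace Ω] [MeasurableSpace E] in
lemma apply_index_mul_eq_sum [Fintype κ] (Y : κ → Ω → ℝ) (σ : E → κ) (h : E → ℝ)
    (ω : Ω) (z : E) : Y (σ z) ω * h z = ∑ k, Y k ω * (σ ⁻¹' {k}).indicator h z := by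
  rw [Finset.sum_eq_single (σ z) (fun k _ hk => by simp [Ne.symm hk]) (by simp)]
  simp

section IndexedWeights
variable [Fintype κ] [MeasurableSpace κ] [MeasurableSingletonClass κ] {Y : κ → Ω → ℝ}
  {σ : E → κ} {h : E → ℝ}

lemma integrable_apply_index_mul_of_indepFun (hZ : Measurable Z)
    (hind : IndepFun Z (fun ω k => Y k ω) P) (hY : ∀ k, Integrable (Y k) P)
    (hσ : Measurable σ) (hh : Measurable h) (hhZ : Integrable (fun ω => h (Z ω)) P) :
    Integrable (fun ω => Y (σ (Z ω)) ω * h (Z ω)) P := by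
  simp_rw [apply_index_mul_eq_sum Y σ h]
  refine integrable_finsetSum _ fun k _ => ?_
  have hHk := hh.indicator (hσ (measurableSet_singleton k))
  exact (hind.comp hHk (measurable_pi_apply k)).symm.integrable_mul (hY k)
    (hhZ.indicator (hZ (hσ (measurableSet_singleton k))))

lemma integral_apply_index_mul_of_indepFun (hZ : Measurable Z)
    (hind : IndepFun Z (fun ω k => Y k ω) P) (hY : ∀ k, Integrable (Y k) P) {m : ℝ}
    (hm : ∀ k, ∫ ω, Y k ω ∂P = m) (hσ : Measurable σ) (hh : Measurable h)
    (hhZ : Integrable (fun ω => h (Z ω)) P) :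
    ∫ ω, Y (σ (Z ω)) ω * h (Z ω) ∂P = m * ∫ ω, h (Z ω) ∂P := by
  have hHZ : ∀ k, Integrable (fun ω => (σ ⁻¹' {k}).indicator h (Z ω)) P := fun k =>
    hhZ.indicator (hZ (hσ (measurableSet_singleton k)))
  have hind' : ∀ k, IndepFun (Y k) (fun ω => (σ ⁻¹' {k}).indicator h (Z ω)) P := fun k =>
    (hind.comp (hh.indicator (hσ (measurableSet_singleton k))) (measurable_pi_apply k)).symm
  calc ∫ ω, Y (σ (Z ω)) ω * h (Z ω) ∂P
      = ∑ k, ∫ ω, Y k ω * (σ ⁻¹' {k}).indicator h (Z ω) ∂P := by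
        simp_rw [apply_index_mul_eq_sum Y σ h]
        exact integral_finsetSum _ fun k _ => (hind' k).integrable_mul (hY k) (hHZ k)
    _ = ∑ k, m * ∫ ω, (σ ⁻¹' {k}).indicator h (Z ω) ∂P := by
        refine Finset.sum_congr rfl fun k _ => ?_
        rw [← hm k]
        exact (hind' k).integral_mul_eq_mul_integral (hY k).1 (hHZ k).1
    _ = m * ∫ ω, h (Z ω) ∂P := by
        rw [← Finset.mul_sum, ← integral_finsetSum _ fun k _ => hHZ k]
        simp_rw [sum_indicator_preimage_singleton]

end IndexedWeights

variable [Fintype ι] [LinearOrder ι] [Nonempty ι] [MeasurableSpace ι]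
  [MeasurableSingletonClass ι]

theorem integral_iInf_mul_add_mul_le (hZ : Measurable Z) {Y : ι ⊕ ι → Ω → ℝ} {m : ℝ}
    (hind : IndepFun Z (fun ω k => Y k ω) P) (hY : ∀ k, Integrable (Y k) P)
    (hm : ∀ k, ∫ ω, Y k ω ∂P = m) (hY0 : ∀ᵐ ω ∂P, ∀ k, 0 ≤ Y k ω)
    {a b : ι → E → ℝ} (ha : ∀ j, Measurable (a j)) (hb : ∀ j, Measurable (b j))
    (ha0 : ∀ j z, 0 ≤ a j z) (hb0 : ∀ j z, 0 ≤ b j z)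
    (haZ : ∀ j, Integrable (fun ω => a j (Z ω)) P) (hbZ : ∀ j, Integrable (fun ω => b j (Z ω)) P) :
    ∫ ω, ⨅ j, (Y (.inl j) ω * a j (Z ω) + Y (.inr j) ω * b j (Z ω)) ∂P ≤
      m * ∫ ω, ⨅ j, (a j (Z ω) + b j (Z ω)) ∂P := by
  set J := argminIndex fun j z => a j z + b j z
  have hJ : Measurable J := measurable_argminIndex fun j => (ha j).add (hb j)
  have hinl : Measurable fun z => (.inl (J z) : ι ⊕ ι) := measurable_inl.comp hJ
  have hinr : Measurable fun z => (.inr (J z) : ι ⊕ ι) := measurable_inr.comp hJ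
  have hAZ := integrable_apply_index hZ ha haZ hJ
  have hBZ := integrable_apply_index hZ hb hbZ hJ
  have hYA := integrable_apply_index_mul_of_indepFun hZ hind hY hinl
    (measurable_apply_index ha hJ) hAZ
  have hYB := integrable_apply_index_mul_of_indepFun hZ hind hY hinr
    (measurable_apply_index hb hJ) hBZ
  calc ∫ ω, ⨅ j, (Y (.inl j) ω * a j (Z ω) + Y (.inr j) ω * b j (Z ω)) ∂P
      ≤ ∫ ω, (Y (.inl (J (Z ω))) ω * a (J (Z ω)) (Z ω) +
          Y (.inr (J (Z ω))) ω * b (J (Z ω)) (Z ω)) ∂P := by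
        refine integral_mono_of_nonneg ?_ (hYA.add hYB)
          (ae_of_all _ fun ω => ciInf_le (Set.finite_range _).bddBelow _)
        filter_upwards [hY0] with ω hω
        exact le_ciInf fun j =>
          add_nonneg (mul_nonneg (hω _) (ha0 j _)) (mul_nonneg (hω _) (hb0 j _))
    _ = m * ∫ ω, (a (J (Z ω)) (Z ω) + b (J (Z ω)) (Z ω)) ∂P := by
        rw [integral_add hYA hYB, integral_add hAZ hBZ, mul_add,
          integral_apply_index_mul_of_indepFun hZ hind hY hm hinl
            (measurable_apply_index ha hJ) hAZ,
          integral_apply_index_mul_of_indepFun hZ hind hY hm hinr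
            (measurable_apply_index hb hJ) hBZ]
    _ = m * ∫ ω, ⨅ j, (a j (Z ω) + b j (Z ω)) ∂P := by
        simp only [iInf_eq_argminIndex (fun j z => a j z + b j z), J]

end RandomIndex

section Columns
variable {n : ℕ}

def colQuad (Q M : Matrix (Fin n) (Fin n) ℝ) (j : Fin n) : ℝ :=
  (fun i => M i j) ⬝ᵥ Q *ᵥ fun i => M i j

lemma colQuad_eq_diag (Q M : Matrix (Fin n) (Fin n) ℝ) (j : Fin n) :
    colQuad Q M j = (Mᵀ * Q * M) j j := by
  rw [colQuad, Matrix.mul_apply', dotProduct_mulVec]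
  rfl

lemma sum_colQuad_of_mem_orthogonalGroup (Q : Matrix (Fin n) (Fin n) ℝ)
    {M : Matrix (Fin n) (Fin n) ℝ} (hM : M ∈ orthogonalGroup (Fin n) ℝ) :
    ∑ j, colQuad Q M j = Q.trace := by
  simp only [colQuad_eq_diag]
  change (Mᵀ * Q * M).trace = Q.trace
  rw [Matrix.trace_mul_cycle, show M * Mᵀ = 1 from hM.2, Matrix.one_mul]

lemma colQuad_nonneg {Q : Matrix (Fin n) (Fin n) ℝ} (hQ : Q.PosSemidef)
    (M : Matrix (Fin n) (Fin n) ℝ) (j : Fin n) : 0 ≤ colQuad Q M j :=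
  hQ.dotProduct_mulVec_nonneg _

lemma colQuad_le_trace {Q : Matrix (Fin n) (Fin n) ℝ} (hQ : Q.PosSemidef)
    {M : Matrix (Fin n) (Fin n) ℝ} (hM : M ∈ orthogonalGroup (Fin n) ℝ) (j : Fin n) :
    colQuad Q M j ≤ Q.trace := by
  rw [← sum_colQuad_of_mem_orthogonalGroup Q hM]
  exact Finset.single_le_sum (fun k _ => colQuad_nonneg hQ M k) (Finset.mem_univ j)

lemma measurable_colQuad (Q : Matrix (Fin n) (Fin n) ℝ) (j : Fin n) :
    Measurable fun M => colQuad Q M j := by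
  unfold colQuad
  fun_prop

lemma colMin_nonneg {Q R : Matrix (Fin n) (Fin n) ℝ} (hQ : Q.PosSemidef) (hR : R.PosSemidef)
    (U V : Matrix (Fin n) (Fin n) ℝ) : 0 ≤ colMin Q R U V :=
  Real.iInf_nonneg fun j => add_nonneg (colQuad_nonneg hQ U j) (colQuad_nonneg hR V j)

lemma colMin_le_trace_div [NeZero n] (Q R : Matrix (Fin n) (Fin n) ℝ)
    {U V : Matrix (Fin n) (Fin n) ℝ} (hU : U ∈ orthogonalGroup (Fin n) ℝ)
    (hV : V ∈ orthogonalGroup (Fin n) ℝ) :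
    colMin Q R U V ≤ (Q.trace + R.trace) / n := by
  obtain ⟨j, -, hj⟩ := Finset.exists_le_of_sum_le Finset.univ_nonempty
    (f := fun j => colQuad Q U j + colQuad R V j) (g := fun _ => (Q.trace + R.trace) / n) (by
      rw [Finset.sum_add_distrib, sum_colQuad_of_mem_orthogonalGroup Q hU,
        sum_colQuad_of_mem_orthogonalGroup R hV, Finset.sum_const, Finset.card_univ,
        Fintype.card_fin, nsmul_eq_mul, mul_div_cancel₀ _ (NeZero.ne (n : ℝ))])
  exact (ciInf_le (Set.finite_range _).bddBelow j).trans hj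

lemma integrable_colQuad {Ω : Type*} [MeasurableSpace Ω] {P : Measure Ω} [IsFiniteMeasure P]
    {A : Matrix (Fin n) (Fin n) ℝ} (hA : A.PosSemidef) {M : Ω → Matrix (Fin n) (Fin n) ℝ}
    (hM : Measurable M) (horth : ∀ᵐ ω ∂P, M ω ∈ orthogonalGroup (Fin n) ℝ) (j : Fin n) :
    Integrable (fun ω => colQuad A (M ω) j) P :=
  (integrable_const A.trace).mono' ((measurable_colQuad A j).comp hM).aestronglyMeasurable
    (horth.mono fun ω hω => by
      rw [Real.norm_of_nonneg (colQuad_nonneg hA _ j)]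
      exact colQuad_le_trace hA hω j)

end Columns

theorem statement5_general {Ω : Type*} [MeasurableSpace Ω] (P : Measure Ω) [IsProbabilityMeasure P]
    (n : ℕ) (hn : 1 ≤ n) (Q R : Matrix (Fin n) (Fin n) ℝ)
    (hQ : Q.PosSemidef) (hR : R.PosSemidef)
    (S : Matrix (Fin n ⊕ Fin n) (Fin n ⊕ Fin n) ℝ) (hSdef : S = Matrix.fromBlocks Q 0 0 R)
    (U V : Ω → Matrix (Fin n) (Fin n) ℝ)
    (hU : IsHaarOrthogonal P U) (hV : IsHaarOrthogonal P V)
    (W : Fin n ⊕ Fin n → Ω → ℝ) (hWm : ∀ i, Measurable (W i))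
    (hWchi : ∀ i, Measure.map (W i) P = gammaMeasure ((n : ℝ) / 2) (1 / 2))
    (hWUV : IndepFun (fun ω => (U ω, V ω)) (fun ω i => W i ω) P) :
    (1 / (n : ℝ)) *
        ∫ ω, (⨅ j : Fin n,
          (W (Sum.inl j) ω * ((fun i => U ω i j) ⬝ᵥ Q.mulVec fun i => U ω i j) +
            W (Sum.inr j) ω * ((fun i => V ω i j) ⬝ᵥ R.mulVec fun i => V ω i j))) ∂P ≤
      (∫ ω, colMin Q R (U ω) (V ω) ∂P) ∧
    (∫ ω, colMin Q R (U ω) (V ω) ∂P) ≤ S.trace / n := by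
  have : NeZero n := ⟨by omega⟩
  have hn' : (0 : ℝ) < n := by exact_mod_cast hn
  have hshape : (0 : ℝ) < n / 2 := by positivity
  have hWint : ∀ i, Integrable (W i) P := fun i =>
    integrable_of_map_eq_gammaMeasure (hWm i) (hWchi i) hshape one_half_pos
  have hWmean : ∀ i, ∫ ω, W i ω ∂P = n := fun i => by
    rw [integral_eq_of_map_eq_gammaMeasure (hWm i) (hWchi i) hshape one_half_pos]
    ring
  have hW0 : ∀ᵐ ω ∂P, ∀ i, 0 ≤ W i ω :=
    ae_all_iff.mpr fun i => ae_nonneg_of_map_eq_gammaMeasure (hWm i) (hWchi i)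
  constructor
  · rw [one_div, inv_mul_le_iff₀ hn']
    exact integral_iInf_mul_add_mul_le (hU.1.prodMk hV.1) hWUV hWint hWmean hW0
      (fun j => (measurable_colQuad Q j).comp measurable_fst)
      (fun j => (measurable_colQuad R j).comp measurable_snd)
      (fun j p => colQuad_nonneg hQ p.1 j) (fun j p => colQuad_nonneg hR p.2 j)
      (integrable_colQuad hQ hU.1 hU.2.1) (integrable_colQuad hR hV.1 hV.2.1)
  · have htrace : S.trace = Q.trace + R.trace := by
      simp [hSdef, Matrix.trace, Fintype.sum_sum_type]
    calc ∫ ω, colMin Q R (U ω) (V ω) ∂P ≤ ∫ _, (Q.trace + R.trace) / n ∂P :=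
          integral_mono_of_nonneg (ae_of_all _ fun ω => colMin_nonneg hQ hR _ _)
            (integrable_const _) ((hU.2.1.and hV.2.1).mono fun ω hω =>
              colMin_le_trace_div Q R hω.1 hω.2)
      _ = S.trace / n := by simp [htrace]

/-- If `N_1, …, N_n, M_1, …, M_n` (encoded as the family
`W : Fin n ⊕ Fin n → Ω → ℝ`, with `N_j = W (inl j)` and `M_j = W (inr j)`) are i.i.d.
`χ²_n` random variables independent of `(U, V)`, then
`(1/n) E[min_j (N_j u_j^⊤ Q u_j + M_j v_j^⊤ R v_j)] ≤ E[μ] ≤ trace S / n`. -/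
theorem statement5 {Ω : Type*} [MeasurableSpace Ω] (P : Measure Ω) [IsProbabilityMeasure P]
    (n : ℕ) (hn : 1 ≤ n) (Q R : Matrix (Fin n) (Fin n) ℝ)
    (hQ : Q.PosSemidef) (hR : R.PosSemidef)
    (S : Matrix (Fin n ⊕ Fin n) (Fin n ⊕ Fin n) ℝ) (hSdef : S = Matrix.fromBlocks Q 0 0 R)
    (U V : Ω → Matrix (Fin n) (Fin n) ℝ)
    (hU : IsHaarOrthogonal P U) (hV : IsHaarOrthogonal P V)
    (hUV : IndepFun U V P)
    (W : Fin n ⊕ Fin n → Ω → ℝ) (hWm : ∀ i, Measurable (W i))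
    (hWiid : iIndepFun W P)
    (hWchi : ∀ i, Measure.map (W i) P = gammaMeasure ((n : ℝ) / 2) (1 / 2))
    (hWUV : IndepFun (fun ω => (U ω, V ω)) (fun ω i => W i ω) P) :
    (1 / (n : ℝ)) *
        ∫ ω, (⨅ j : Fin n,
          (W (Sum.inl j) ω * ((fun i => U ω i j) ⬝ᵥ Q.mulVec fun i => U ω i j) +
            W (Sum.inr j) ω * ((fun i => V ω i j) ⬝ᵥ R.mulVec fun i => V ω i j))) ∂P ≤
      (∫ ω, colMin Q R (U ω) (V ω) ∂P) ∧
    (∫ ω, colMin Q R (U ω) (V ω) ∂P) ≤ S.trace / n :=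
  statement5_general P n hn Q R hQ hR S hSdef U V hU hV W hWm hWchi hWUV

end
end

section
/- Let n ≥ 1 and r ≥ 1, let s_1, …, s_r be positive reals, and let ζ_1, …, ζ_n be real random variables on a common probability space, not necessarily independent, such that each ζ_j has the same distribution as Σ_{l=1}^r s_l·X_l² where X_1, …, X_r are i.i.d. standard real Gaussians. Then E[ min_{1≤j≤n} ζ_j ] ≥ T·(1 − 2·(σ/T)·√(log n)), where T := Σ_{l=1}^r s_l and σ := (Σ_{l=1}^r s_l²)^{1/2}. -/
/-!
For `t ≥ 0` each factor of the moment generating function of `T - ζⱼ` is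
`E exp(t sₗ (1 - X²)) = exp(c) / √(1 + 2c)` with `c = t sₗ`, and `log (1 + y) ≥ y - y²/2`
bounds it by `exp(c²)`, so `E exp(t (T - ζⱼ)) ≤ exp(t² σ²)` whatever the dependence between
the `ζⱼ`.
Jensen's inequality and the union bound `exp(t (T - min ζ)) ≤ ∑ⱼ exp(t (T - ζⱼ))` give
`t (T - E[min ζ]) ≤ log n + t² σ²`, and the choice `t = (T - E[min ζ]) / (2σ²)` yields
`T - E[min ζ] ≤ 2σ √(log n)`.
-/

open MeasureTheory ProbabilityTheory

/-- The law of `Σ_l s_l X_l²` where `X_1, …, X_r` are i.i.d. standard real Gaussians. -/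
noncomputable def chiSqCombo (r : ℕ) (s : Fin r → ℝ) : Measure ℝ :=
  Measure.map (fun x : Fin r → ℝ => ∑ l, s l * x l ^ 2)
    (Measure.pi fun _ : Fin r => gaussianReal 0 1)

open Real

theorem Real.exp_sub_sq_div_two_le_one_add {x : ℝ} (hx : 0 ≤ x) :
    exp (x - x ^ 2 / 2) ≤ 1 + x := by
  rw [← le_log_iff_exp_le (by linarith)]
  refine le_trans ?_ (le_log_one_add_of_nonneg hx)
  rw [le_div_iff₀ (by linarith)]
  nlinarith [pow_nonneg hx 3]

theorem Real.exp_div_sqrt_one_add_two_mul_le {c : ℝ} (hc : 0 ≤ c) :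
    exp c / √(1 + 2 * c) ≤ exp (c ^ 2) := by
  have hsqrt : exp (c - c ^ 2) ≤ √(1 + 2 * c) := by
    rw [le_sqrt (exp_nonneg _) (by positivity), ← exp_nat_mul]
    convert exp_sub_sq_div_two_le_one_add (x := 2 * c) (by positivity) using 2
    push_cast
    ring
  rw [div_le_iff₀ (by positivity)]
  calc exp c = exp (c ^ 2) * exp (c - c ^ 2) := by rw [← exp_add]; ring_nf
    _ ≤ exp (c ^ 2) * √(1 + 2 * c) := by gcongr

theorem integral_exp_mul_one_sub_sq_gaussianReal {c : ℝ} (hc : -(1 / 2) < c) :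
    ∫ x, exp (c * (1 - x ^ 2)) ∂gaussianReal 0 1 = exp c / √(1 + 2 * c) := by
  rw [integral_gaussianReal_eq_integral_smul one_ne_zero]
  have h (x : ℝ) : gaussianPDFReal 0 1 x • exp (c * (1 - x ^ 2))
      = ((√(2 * π))⁻¹ * exp c) * exp (-(c + 1 / 2) * x ^ 2) := by
    simp only [gaussianPDFReal, smul_eq_mul, NNReal.coe_one, mul_one, sub_zero]
    rw [mul_assoc, mul_assoc, ← exp_add, ← exp_add]
    ring_nf
  simp_rw [h]
  rw [integral_const_mul, integral_gaussian, sqrt_div pi_pos.le,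
    show (2 : ℝ) * π = π * 2 by ring, sqrt_mul pi_pos.le]
  have hsqrt : √(1 + 2 * c) = √(c + 1 / 2) * √2 := by
    rw [← sqrt_mul (by linarith)]
    ring_nf
  have : 0 < √π := by positivity
  have : 0 < √(c + 1 / 2) := sqrt_pos.2 (by linarith)
  rw [hsqrt]
  field_simp

theorem integral_exp_mul_one_sub_sq_gaussianReal_le {c : ℝ} (hc : 0 ≤ c) :
    ∫ x, exp (c * (1 - x ^ 2)) ∂gaussianReal 0 1 ≤ exp (c ^ 2) := by
  rw [integral_exp_mul_one_sub_sq_gaussianReal (by linarith)]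
  exact exp_div_sqrt_one_add_two_mul_le hc

theorem integrable_exp_mul_one_sub_sq_gaussianReal {c : ℝ} (hc : 0 ≤ c) :
    Integrable (fun x => exp (c * (1 - x ^ 2))) (gaussianReal 0 1) := by
  refine .of_bound (by fun_prop) (exp c) (ae_of_all _ fun x => ?_)
  rw [norm_of_nonneg (exp_nonneg _), exp_le_exp]
  nlinarith [sq_nonneg x]

section chiSqCombo

variable {r : ℕ} {s : Fin r → ℝ}

lemma measurable_sum_mul_sq : Measurable (fun x : Fin r → ℝ => ∑ l, s l * x l ^ 2) := by
  fun_prop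

lemma integrable_id_chiSqCombo : Integrable id (chiSqCombo r s) := by
  rw [chiSqCombo, integrable_map_measure aestronglyMeasurable_id
    measurable_sum_mul_sq.aemeasurable, Function.id_comp]
  refine integrable_finsetSum _ fun l _ => ?_
  exact integrable_comp_eval (μ := fun _ => gaussianReal 0 1) (f := fun y : ℝ => s l * y ^ 2)
    ((memLp_id_gaussianReal 2).integrable_sq.const_mul _)

lemma exp_mul_sum_sub_sum_mul_sq (t : ℝ) (x : Fin r → ℝ) :
    exp (t * (∑ l, s l - ∑ l, s l * x l ^ 2)) = ∏ l, exp (t * s l * (1 - x l ^ 2)) := by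
  rw [← exp_sum, ← Finset.sum_sub_distrib, Finset.mul_sum]
  congr 1
  exact Finset.sum_congr rfl fun l _ => by ring

lemma integrable_exp_chiSqCombo (hs : ∀ l, 0 ≤ s l) {t : ℝ} (ht : 0 ≤ t) :
    Integrable (fun x => exp (t * (∑ l, s l - x))) (chiSqCombo r s) := by
  rw [chiSqCombo, integrable_map_measure (by fun_prop) measurable_sum_mul_sq.aemeasurable]
  simp only [Function.comp_def, exp_mul_sum_sub_sum_mul_sq]
  exact Integrable.fintype_prod fun l =>
    integrable_exp_mul_one_sub_sq_gaussianReal (mul_nonneg ht (hs l))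

lemma integral_exp_chiSqCombo_le (hs : ∀ l, 0 ≤ s l) {t : ℝ} (ht : 0 ≤ t) :
    ∫ x, exp (t * (∑ l, s l - x)) ∂chiSqCombo r s ≤ exp (t ^ 2 * ∑ l, s l ^ 2) := by
  rw [chiSqCombo, integral_map measurable_sum_mul_sq.aemeasurable (by fun_prop)]
  simp only [exp_mul_sum_sub_sum_mul_sq]
  rw [integral_fintype_prod_eq_prod (fun l y => exp (t * s l * (1 - y ^ 2))), Finset.mul_sum,
    exp_sum]
  refine Finset.prod_le_prod (fun l _ => integral_nonneg fun _ => (exp_pos _).le) fun l _ => ?_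
  rw [show t ^ 2 * s l ^ 2 = (t * s l) ^ 2 by ring]
  exact integral_exp_mul_one_sub_sq_gaussianReal_le (mul_nonneg ht (hs l))

end chiSqCombo

lemma le_two_mul_sqrt_of_forall_mul_le {a L v : ℝ} (hv : 0 < v)
    (h : ∀ t, 0 < t → t * a ≤ L + t ^ 2 * v) : a ≤ 2 * √(v * L) := by
  rcases le_or_gt a 0 with ha | ha
  · exact ha.trans (by positivity)
  have hL := h (a / (2 * v)) (by positivity)
  have : (a / 2) ^ 2 ≤ v * L := by
    rw [div_pow, mul_pow] at hL
    field_simp at hL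
    nlinarith
  linarith [le_sqrt_of_sq_le this]

lemma apply_ciInf_le_sum {ι : Type*} [Fintype ι] [Nonempty ι] {f : ℝ → ℝ}
    (hf : ∀ y, 0 ≤ f y) (x : ι → ℝ) : f (⨅ j, x j) ≤ ∑ j, f (x j) := by
  obtain ⟨j, hj⟩ := exists_eq_ciInf_of_finite (f := x)
  rw [← hj]
  exact Finset.single_le_sum (fun j _ => hf (x j)) (Finset.mem_univ j)

section iInf

variable {Ω ι : Type*} [MeasurableSpace Ω] {P : Measure Ω} [Fintype ι] [Nonempty ι]
  {ζ : ι → Ω → ℝ}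

lemma integrable_iInf (hm : ∀ j, Measurable (ζ j)) (hi : ∀ j, Integrable (ζ j) P) :
    Integrable (fun ω => ⨅ j, ζ j ω) P :=
  (integrable_finsetSum Finset.univ fun j _ => (hi j).abs).mono'
    (Measurable.iInf hm).aestronglyMeasurable
    (ae_of_all _ fun ω => apply_ciInf_le_sum (f := abs) abs_nonneg fun j => ζ j ω)

variable [IsProbabilityMeasure P]

theorem mul_sub_integral_iInf_le {m t M : ℝ}
    (hm : ∀ j, Measurable (ζ j)) (hi : ∀ j, Integrable (ζ j) P)
    (hexp : ∀ j, Integrable (fun ω => exp (t * (m - ζ j ω))) P)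
    (hmgf : ∀ j, ∫ ω, exp (t * (m - ζ j ω)) ∂P ≤ exp M) :
    t * (m - ∫ ω, ⨅ j, ζ j ω ∂P) ≤ log (Fintype.card ι) + M := by
  have hle_sum (ω : Ω) : exp (t * (m - ⨅ j, ζ j ω)) ≤ ∑ j, exp (t * (m - ζ j ω)) :=
    apply_ciInf_le_sum (f := fun y => exp (t * (m - y))) (fun _ => (exp_pos _).le) _
  have hsum : Integrable (fun ω => ∑ j, exp (t * (m - ζ j ω))) P :=
    integrable_finsetSum _ fun j _ => hexp j
  have hmin : Integrable (fun ω => exp (t * (m - ⨅ j, ζ j ω))) P := by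
    refine hsum.mono' ?_ (ae_of_all _ fun ω => ?_)
    · exact (measurable_exp.comp
        ((measurable_const.sub (.iInf hm)).const_mul t)).aestronglyMeasurable
    · rw [norm_of_nonneg (exp_pos _).le]
      exact hle_sum ω
  have jensen :
      exp (∫ ω, t * (m - ⨅ j, ζ j ω) ∂P) ≤ ∫ ω, exp (t * (m - ⨅ j, ζ j ω)) ∂P :=
    convexOn_exp.map_integral_le continuousOn_exp isClosed_univ (ae_of_all _ fun _ => trivial)
      (((integrable_const m).sub (integrable_iInf hm hi)).const_mul t) hmin
  rw [integral_const_mul, integral_sub (integrable_const m) (integrable_iInf hm hi),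
    integral_const, probReal_univ, one_smul] at jensen
  have : exp (t * (m - ∫ ω, ⨅ j, ζ j ω ∂P)) ≤ Fintype.card ι * exp M :=
    calc _ ≤ ∫ ω, exp (t * (m - ⨅ j, ζ j ω)) ∂P := jensen
      _ ≤ ∫ ω, ∑ j, exp (t * (m - ζ j ω)) ∂P := integral_mono hmin hsum hle_sum
      _ = ∑ j, ∫ ω, exp (t * (m - ζ j ω)) ∂P := integral_finsetSum _ fun j _ => hexp j
      _ ≤ ∑ _j : ι, exp M := Finset.sum_le_sum fun j _ => hmgf j
      _ = Fintype.card ι * exp M := by simp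
  rwa [← log_le_log_iff (exp_pos _) (by positivity), log_exp,
    log_mul (by positivity) (exp_pos _).ne', log_exp] at this

theorem sub_two_mul_sqrt_le_integral_iInf {m v : ℝ} (hv : 0 < v)
    (hm : ∀ j, Measurable (ζ j)) (hi : ∀ j, Integrable (ζ j) P)
    (hexp : ∀ t, 0 < t → ∀ j, Integrable (fun ω => exp (t * (m - ζ j ω))) P)
    (hmgf : ∀ t, 0 < t → ∀ j, ∫ ω, exp (t * (m - ζ j ω)) ∂P ≤ exp (t ^ 2 * v)) :
    m - 2 * √(v * log (Fintype.card ι)) ≤ ∫ ω, ⨅ j, ζ j ω ∂P := by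
  have h := le_two_mul_sqrt_of_forall_mul_le hv fun t ht =>
    mul_sub_integral_iInf_le hm hi (hexp t ht) (hmgf t ht)
  linarith

end iInf

/-- If each `ζ_j` (not necessarily independent) is distributed as
`Σ_l s_l X_l²` with `X_l` i.i.d. standard Gaussians, then
`E[min_j ζ_j] ≥ T (1 − 2 (σ/T) √(log n))` where `T = Σ_l s_l` and `σ = (Σ_l s_l²)^{1/2}`. -/
theorem statement9 {Ω : Type*} [MeasurableSpace Ω] (P : Measure Ω) [IsProbabilityMeasure P]
    (n r : ℕ) (hn : 1 ≤ n) (hr : 1 ≤ r) (s : Fin r → ℝ) (hs : ∀ l, 0 < s l)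
    (ζ : Fin n → Ω → ℝ) (hζm : ∀ j, Measurable (ζ j))
    (hζd : ∀ j, Measure.map (ζ j) P = chiSqCombo r s) :
    (∑ l, s l) *
        (1 - 2 * (Real.sqrt (∑ l, s l ^ 2) / ∑ l, s l) * Real.sqrt (Real.log n)) ≤
      ∫ ω, (⨅ j, ζ j ω) ∂P := by
  have : Nonempty (Fin n) := Fin.pos_iff_nonempty.mp hn
  have : Nonempty (Fin r) := Fin.pos_iff_nonempty.mp hr
  have hs₀ (l : Fin r) : 0 ≤ s l := (hs l).le
  have hT : 0 < ∑ l, s l := Finset.sum_pos (fun l _ => hs l) Finset.univ_nonempty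
  have hσ : 0 < ∑ l, s l ^ 2 := Finset.sum_pos (fun l _ => pow_pos (hs l) 2) Finset.univ_nonempty
  have hmap {f : ℝ → ℝ} (hf : Integrable f (chiSqCombo r s)) (j : Fin n) :
      Integrable (fun ω => f (ζ j ω)) P :=
    (hζd j ▸ hf).comp_measurable (hζm j)
  have key := sub_two_mul_sqrt_le_integral_iInf hσ hζm (fun j => hmap integrable_id_chiSqCombo j)
    (fun t ht => hmap (integrable_exp_chiSqCombo hs₀ ht.le)) fun t ht j => by
      rw [← integral_map (f := fun x => exp (t * (∑ l, s l - x))) (hζm j).aemeasurable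
        (by fun_prop), hζd j]
      exact integral_exp_chiSqCombo_le hs₀ ht.le
  rw [Fintype.card_fin, sqrt_mul hσ.le] at key
  convert key using 1
  field_simp
end

section
/- Let r ≥ 1, let s_1, …, s_r be positive reals, let X_1, …, X_r be i.i.d. standard real Gaussian random variables, and set ζ := Σ_{l=1}^r s_l·X_l², T := Σ_{l=1}^r s_l, σ := (Σ_{l=1}^r s_l²)^{1/2}. Then for every x with 0 ≤ x ≤ T, P(ζ ≤ x) ≤ exp( −(T − x)²/(4σ²) ). -/
/-!
Chernoff bound for the lower tail. For `t ≥ 0` and a standard Gaussian `X`,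
`E[exp(-t s X²)] = (1 + 2ts)^{-1/2} ≤ exp(t²s² - ts)`, the inequality being
`log (1 + u) ≥ u - u²/2` for `u ≥ 0`. By independence, `E[exp(-t ζ)] ≤ exp(t²σ² - tT)`,
so `P(ζ ≤ x) ≤ exp(tx + t²σ² - tT)`, and `t = (T - x)/(2σ²)` gives the bound.
-/

open MeasureTheory ProbabilityTheory Real
open scoped NNReal

lemma Real.sub_sq_div_two_le_log_one_add {u : ℝ} (hu : 0 ≤ u) :
    u - u ^ 2 / 2 ≤ log (1 + u) := by
  let g : ℝ → ℝ := fun z => log (1 + z) - z + z ^ 2 / 2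
  have hg : ∀ z, 0 ≤ z → HasDerivAt g (z ^ 2 / (1 + z)) z := fun z hz => by
    have hz' : 1 + z ≠ 0 := by linarith
    refine ((((hasDerivAt_id' z).const_add 1).log hz').fun_sub (hasDerivAt_id' z)
      |>.fun_add ((hasDerivAt_pow 2 z).div_const 2)).congr_deriv ?_
    field_simp
    ring
  have hmono : MonotoneOn g (Set.Ici 0) := by
    refine monotoneOn_of_deriv_nonneg (convex_Ici 0)
      (fun z hz => (hg z hz).continuousAt.continuousWithinAt) ?_ ?_
    · intro z hz
      rw [interior_Ici] at hz
      exact (hg z hz.le).differentiableAt.differentiableWithinAt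
    · intro z hz
      rw [interior_Ici] at hz
      have : (0 : ℝ) < 1 + z := by linarith [Set.mem_Ioi.mp hz]
      rw [(hg z hz.le).deriv]
      positivity
  have h := hmono Set.self_mem_Ici hu hu
  simp only [g, add_zero, log_one, zero_pow two_ne_zero, zero_div, sub_self] at h
  linarith

lemma inv_sqrt_one_add_two_mul_le_exp {c : ℝ} (hc : 0 ≤ c) :
    (√(1 + 2 * c))⁻¹ ≤ exp (c ^ 2 - c) := by
  have hpos : 0 < 1 + 2 * c := by linarith
  rw [sqrt_eq_rpow, ← rpow_neg hpos.le, rpow_def_of_pos hpos]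
  gcongr
  nlinarith [Real.sub_sq_div_two_le_log_one_add (u := 2 * c) (by linarith)]

lemma mgf_sq_gaussianReal (v : ℝ≥0) {t : ℝ} (ht : 2 * v * t < 1) :
    mgf (fun y => y ^ 2) (gaussianReal 0 v) t = (√(1 - 2 * v * t))⁻¹ := by
  rcases eq_or_ne v 0 with rfl | hv
  · simp [gaussianReal_zero_var, mgf]
  have hintegrand : ∀ y : ℝ, gaussianPDFReal 0 v y • exp (t * y ^ 2) =
      (√(2 * π * v))⁻¹ * exp (-((1 - 2 * v * t) / (2 * v)) * y ^ 2) := fun y => by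
    rw [gaussianPDFReal, smul_eq_mul, mul_assoc, ← exp_add]
    congr 2
    field_simp
    ring
  rw [mgf, integral_gaussianReal_eq_integral_smul hv]
  simp_rw [hintegrand]
  rw [integral_const_mul, integral_gaussian, div_div_eq_mul_div, sqrt_div' _ (by linarith),
    mul_div_assoc', show π * (2 * v) = 2 * π * v by ring, inv_mul_cancel₀ (by positivity),
    one_div]

section

variable {Ω : Type*} [MeasurableSpace Ω] {P : Measure Ω}

lemma aemeasurable_of_map_eq_gaussianReal {X : Ω → ℝ} {μ : ℝ} {v : ℝ≥0}
    (hX : P.map X = gaussianReal μ v) : AEMeasurable X P :=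
  .of_map_ne_zero (hX ▸ IsProbabilityMeasure.ne_zero _)

lemma mgf_sq_of_map_eq_gaussianReal {X : Ω → ℝ} {v : ℝ≥0} (hX : P.map X = gaussianReal 0 v)
    {t : ℝ} (ht : 2 * v * t < 1) : mgf (fun ω => X ω ^ 2) P t = (√(1 - 2 * v * t))⁻¹ := by
  rw [← mgf_sq_gaussianReal v ht, ← hX,
    mgf_map (aemeasurable_of_map_eq_gaussianReal hX) (by fun_prop)]
  rfl

lemma mgf_neg_sum_mul_sq_le {ι : Type*} [Fintype ι] {X : ι → Ω → ℝ} (hXi : iIndepFun X P)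
    (hXg : ∀ i, P.map (X i) = gaussianReal 0 1) {s : ι → ℝ} (hs : ∀ i, 0 ≤ s i) {t : ℝ}
    (ht : 0 ≤ t) :
    mgf (fun ω => ∑ i, s i * X i ω ^ 2) P (-t) ≤
      exp (t ^ 2 * ∑ i, s i ^ 2 - t * ∑ i, s i) := by
  have hXm i : AEMeasurable (X i) P := aemeasurable_of_map_eq_gaussianReal (hXg i)
  have hYi : iIndepFun (fun i ω => s i * X i ω ^ 2) P :=
    hXi.comp (fun i y => s i * y ^ 2) (fun i => by fun_prop)
  have hsum : (fun ω => ∑ i, s i * X i ω ^ 2) = ∑ i, fun ω => s i * X i ω ^ 2 := by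
    ext; simp
  rw [hsum, hYi.mgf_sum₀ (fun i => by fun_prop), Finset.mul_sum, Finset.mul_sum,
    ← Finset.sum_sub_distrib, exp_sum]
  gcongr with i
  · exact fun i _ => mgf_nonneg
  rw [mgf_const_mul, mgf_sq_of_map_eq_gaussianReal (hXg i) (by push_cast; nlinarith [hs i])]
  calc _ = (√(1 + 2 * (t * s i)))⁻¹ := by push_cast; ring_nf
    _ ≤ exp ((t * s i) ^ 2 - t * s i) := inv_sqrt_one_add_two_mul_le_exp (mul_nonneg ht (hs i))
    _ = _ := by ring_nf

lemma measureReal_sum_mul_sq_le_le_exp {ι : Type*} [Fintype ι] {X : ι → Ω → ℝ}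
    (hXi : iIndepFun X P) (hXg : ∀ i, P.map (X i) = gaussianReal 0 1) {s : ι → ℝ}
    (hs : ∀ i, 0 ≤ s i) {t : ℝ} (ht : 0 ≤ t) (x : ℝ) :
    P.real {ω | ∑ i, s i * X i ω ^ 2 ≤ x} ≤
      exp (t * x + (t ^ 2 * ∑ i, s i ^ 2 - t * ∑ i, s i)) := by
  have := hXi.isProbabilityMeasure
  have hXm i : AEMeasurable (X i) P := aemeasurable_of_map_eq_gaussianReal (hXg i)
  have hint : Integrable (fun ω => exp (-t * ∑ i, s i * X i ω ^ 2)) P := by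
    refine .of_bound (by fun_prop) 1 (ae_of_all _ fun ω => ?_)
    have : 0 ≤ ∑ i, s i * X i ω ^ 2 := Finset.sum_nonneg fun i _ => by have := hs i; positivity
    rw [norm_of_nonneg (exp_nonneg _), exp_le_one_iff]
    nlinarith
  calc _ ≤ exp (-(-t) * x) * mgf (fun ω => ∑ i, s i * X i ω ^ 2) P (-t) :=
        measure_le_le_exp_mul_mgf x (neg_nonpos.2 ht) hint
    _ ≤ exp (t * x) * exp (t ^ 2 * ∑ i, s i ^ 2 - t * ∑ i, s i) := by
        rw [neg_neg]
        gcongr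
        exact mgf_neg_sum_mul_sq_le hXi hXg hs ht
    _ = _ := (exp_add _ _).symm

end

theorem statement13_general {Ω : Type*} [MeasurableSpace Ω] (P : Measure Ω)
    (r : ℕ) (s : Fin r → ℝ) (hs : ∀ l, 0 < s l)
    (X : Fin r → Ω → ℝ)
    (hXi : iIndepFun X P)
    (hXg : ∀ l, Measure.map (X l) P = gaussianReal 0 1)
    (x : ℝ) (hxT : x ≤ ∑ l, s l) :
    P {ω | ∑ l, s l * X l ω ^ 2 ≤ x} ≤
      ENNReal.ofReal (Real.exp (-((∑ l, s l) - x) ^ 2 / (4 * ∑ l, s l ^ 2))) := by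
  have := hXi.isProbabilityMeasure
  set T := ∑ l, s l
  set σ2 := ∑ l, s l ^ 2
  -- the Chernoff exponent `t x + t² σ² - t T` is minimised at `t = (T - x) / (2 σ²)`
  have hopt : (T - x) / (2 * σ2) * x + (((T - x) / (2 * σ2)) ^ 2 * σ2 - (T - x) / (2 * σ2) * T)
      = -(T - x) ^ 2 / (4 * σ2) := by
    rcases eq_or_ne σ2 0 with hσ | hσ
    · simp [hσ]
    · field_simp
      ring
  have hσ : 0 ≤ σ2 := Finset.sum_nonneg fun l _ => sq_nonneg (s l)
  rw [← ofReal_measureReal, ← hopt]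
  exact ENNReal.ofReal_le_ofReal <| measureReal_sum_mul_sq_le_le_exp hXi hXg (fun l => (hs l).le)
    (div_nonneg (sub_nonneg.2 hxT) (by positivity)) x

/-- For `ζ = Σ_l s_l X_l²` with `X_l` i.i.d. standard Gaussians,
`T = Σ_l s_l` and `σ² = Σ_l s_l²`, for every `0 ≤ x ≤ T`,
`P(ζ ≤ x) ≤ exp(−(T − x)²/(4σ²))`. -/
theorem statement13 {Ω : Type*} [MeasurableSpace Ω] (P : Measure Ω) [IsProbabilityMeasure P]
    (r : ℕ) (hr : 1 ≤ r) (s : Fin r → ℝ) (hs : ∀ l, 0 < s l)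
    (X : Fin r → Ω → ℝ) (hXm : ∀ l, Measurable (X l))
    (hXi : iIndepFun X P)
    (hXg : ∀ l, Measure.map (X l) P = gaussianReal 0 1)
    (x : ℝ) (hx0 : 0 ≤ x) (hxT : x ≤ ∑ l, s l) :
    P {ω | ∑ l, s l * X l ω ^ 2 ≤ x} ≤
      ENNReal.ofReal (Real.exp (-((∑ l, s l) - x) ^ 2 / (4 * ∑ l, s l ^ 2))) :=
  statement13_general P r s hs X hXi hXg x hxT
end
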